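/- Let n ≥ 1. Define F_es = (1/2ⁿ) ( I + Σ_{x ≠ y ∈ {0,1}ⁿ} |x x⟩⟨y y| ) and F_comp = Σ_{x ∈ {0,1}ⁿ} |x x⟩⟨x x|, both 4ⁿ×4ⁿ matrices indexed by pairs of bit strings. Then the total frame operator F = F_es + F_comp equals (1/2ⁿ) I + |Φ⟩⟨Φ| + (1 − 1/2ⁿ) Σ_{x ∈ {0,1}ⁿ} |x x⟩⟨x x|, where Φ = 2^{−n/2} Σ_{x ∈ {0,1}ⁿ} e_{(x,x)}, and F is positive definite (in particular invertible); hence the union of the ESPOVM and the computational basis is informationally complete. -/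

import Mathlib

open Finset Matrix
open scoped ComplexOrder

/-- Bit strings of length `n`. -/
abbrev Bits (n : ℕ) := Fin n → Fin 2

/-- The ESPOVM frame operator `F_es = (1/2ⁿ)(I + Σ_{x ≠ y} |x x⟩⟨y y|)`. -/
noncomputable def Fes (n : ℕ) : Matrix (Bits n × Bits n) (Bits n × Bits n) ℂ :=
  ((2 : ℂ) ^ n)⁻¹ •
    ((1 : Matrix (Bits n × Bits n) (Bits n × Bits n) ℂ)
      + ∑ p ∈ Finset.univ.filter (fun p : Bits n × Bits n => p.1 ≠ p.2),
          Matrix.single (p.1, p.1) (p.2, p.2) (1 : ℂ))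

/-- The computational-basis frame operator `F_comp = Σ_x |x x⟩⟨x x|`. -/
noncomputable def Fcomp (n : ℕ) : Matrix (Bits n × Bits n) (Bits n × Bits n) ℂ :=
  ∑ x : Bits n, Matrix.single (x, x) (x, x) (1 : ℂ)

/-- The normalized vector `Φ = 2^{−n/2} Σ_x e_{(x,x)}`. -/
noncomputable def PhiVec (n : ℕ) : Bits n × Bits n → ℂ :=
  fun p => if p.1 = p.2 then ((Real.sqrt (2 ^ n) : ℂ))⁻¹ else 0

/-!
The units `|x x⟩⟨y y|` with `x ≠ y` in `F_es`, together with the units `|x x⟩⟨x x|`, sum to the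
all-ones block on the diagonal pairs, which is `2ⁿ |Φ⟩⟨Φ|`; regrouping gives the decomposition.
In it, `(1/2ⁿ) I` is positive definite while `|Φ⟩⟨Φ|` and `(1 − 1/2ⁿ) Σ_x |x x⟩⟨x x|` are positive
semidefinite, so `F` is positive definite and hence invertible.
-/

namespace Matrix

variable {α R : Type*} [DecidableEq α]

/-- The unnormalized `Σ_x e_{(x,x)}`. -/
def diagIndicator (α R : Type*) [DecidableEq α] [Zero R] [One R] : α × α → R :=
  fun p => if p.1 = p.2 then 1 else 0

lemma diagIndicator_eq_sum [Fintype α] [Semiring R] :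
    diagIndicator α R = ∑ x, Pi.single (x, x) 1 := by
  ext ⟨a, b⟩
  simp only [diagIndicator, Finset.sum_apply, Pi.single_apply, Prod.mk.injEq, ite_and,
    Finset.sum_ite_eq, mem_univ, if_true, eq_comm]

lemma star_diagIndicator [Semiring R] [StarRing R] :
    star (diagIndicator α R) = diagIndicator α R := by
  ext p
  simp [diagIndicator, apply_ite star]

lemma vecMulVec_sum_sum {ι κ m n : Type*} [NonUnitalNonAssocSemiring R]
    (s : Finset ι) (t : Finset κ) (u : ι → m → R) (v : κ → n → R) :
    vecMulVec (∑ i ∈ s, u i) (∑ j ∈ t, v j) = ∑ i ∈ s, ∑ j ∈ t, vecMulVec (u i) (v j) := by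
  ext a b
  simp only [vecMulVec_apply, sum_apply, Finset.sum_apply, Finset.sum_mul_sum]

lemma sum_filter_ne_add_sum_diag [Fintype α] [AddCommMonoid R] (f : α → α → R) :
    ∑ p ∈ univ.filter (fun p : α × α => p.1 ≠ p.2), f p.1 p.2 + ∑ x, f x x =
      ∑ x, ∑ y, f x y := by
  rw [Finset.sum_filter, Fintype.sum_prod_type, ← Finset.sum_add_distrib]
  refine Finset.sum_congr rfl fun x _ => ?_
  rw [← Finset.sum_filter, Finset.filter_ne, Finset.sum_erase_add _ _ (mem_univ x)]

lemma vecMulVec_diagIndicator [Fintype α] [Semiring R] :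
    vecMulVec (diagIndicator α R) (diagIndicator α R) =
      ∑ p ∈ univ.filter (fun p : α × α => p.1 ≠ p.2), single (p.1, p.1) (p.2, p.2) (1 : R)
        + ∑ x, single (x, x) (x, x) (1 : R) := by
  rw [sum_filter_ne_add_sum_diag (fun x y => single (x, x) (y, y) (1 : R)), diagIndicator_eq_sum,
    vecMulVec_sum_sum]
  simp only [single_eq_single_vecMulVec_single]

lemma posSemidef_single_one {n : Type*} [Fintype n] [DecidableEq n] [Ring R] [PartialOrder R]
    [StarRing R] [StarOrderedRing R] (i : n) :
    (single i i (1 : R)).PosSemidef := by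
  rw [single_eq_single_vecMulVec_single]
  simpa using posSemidef_vecMulVec_self_star (Pi.single i (1 : R))

end Matrix

lemma PhiVec_eq_smul (n : ℕ) :
    PhiVec n = ((Real.sqrt (2 ^ n) : ℂ))⁻¹ • diagIndicator (Bits n) ℂ := by
  ext p
  simp [PhiVec, diagIndicator]

lemma vecMulVec_PhiVec (n : ℕ) :
    vecMulVec (PhiVec n) (star (PhiVec n)) =
      ((2 : ℂ) ^ n)⁻¹ • vecMulVec (diagIndicator (Bits n) ℂ) (diagIndicator (Bits n) ℂ) := by
  rw [PhiVec_eq_smul, star_smul, star_diagIndicator, smul_vecMulVec, vecMulVec_smul, smul_smul]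
  congr 1
  rw [star_inv₀, Complex.star_def, Complex.conj_ofReal, ← mul_inv, ← Complex.ofReal_mul,
    Real.mul_self_sqrt (by positivity)]
  push_cast
  rfl

theorem total_frame_operator_pos_def_general (n : ℕ) :
    (Fes n + Fcomp n =
        ((2 : ℂ) ^ n)⁻¹ • (1 : Matrix (Bits n × Bits n) (Bits n × Bits n) ℂ)
          + Matrix.vecMulVec (PhiVec n) (star (PhiVec n))
          + (1 - ((2 : ℂ) ^ n)⁻¹) • ∑ x : Bits n, Matrix.single (x, x) (x, x) (1 : ℂ))
      ∧ (Fes n + Fcomp n).PosDef ∧ IsUnit (Fes n + Fcomp n) := by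
  set c : ℂ := ((2 : ℂ) ^ n)⁻¹
  have hF : Fes n + Fcomp n = c • 1 + vecMulVec (PhiVec n) (star (PhiVec n))
      + (1 - c) • ∑ x : Bits n, single (x, x) (x, x) (1 : ℂ) := by
    rw [vecMulVec_PhiVec, vecMulVec_diagIndicator, Fes, Fcomp]
    module
  have hc : 0 < c := by positivity
  have hc_one : 0 ≤ 1 - c := by
    have hc_real : c = (((2 : ℝ) ^ n)⁻¹ : ℝ) := by push_cast; rfl
    rw [hc_real, ← Complex.ofReal_one, ← Complex.ofReal_sub, Complex.zero_le_real, sub_nonneg]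
    exact inv_le_one_of_one_le₀ (one_le_pow₀ one_le_two)
  have hPD : (Fes n + Fcomp n).PosDef := hF ▸
    ((PosDef.one.smul hc).add_posSemidef (posSemidef_vecMulVec_self_star _)).add_posSemidef
      ((posSemidef_sum _ fun x _ => posSemidef_single_one _).smul hc_one)
  exact ⟨hF, hPD, hPD.isUnit⟩

/-- the total frame operator `F = F_es + F_comp` equals
`(1/2ⁿ) I + |Φ⟩⟨Φ| + (1 − 1/2ⁿ) Σ_x |x x⟩⟨x x|` and is positive definite, in
particular invertible; hence ESPOVM together with the computational basis is
informationally complete. -/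
theorem total_frame_operator_pos_def (n : ℕ) (hn : 1 ≤ n) :
    (Fes n + Fcomp n =
        ((2 : ℂ) ^ n)⁻¹ • (1 : Matrix (Bits n × Bits n) (Bits n × Bits n) ℂ)
          + Matrix.vecMulVec (PhiVec n) (star (PhiVec n))
          + (1 - ((2 : ℂ) ^ n)⁻¹) • ∑ x : Bits n, Matrix.single (x, x) (x, x) (1 : ℂ))
      ∧ (Fes n + Fcomp n).PosDef ∧ IsUnit (Fes n + Fcomp n) :=
  total_frame_operator_pos_def_general n
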